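/- Let P_1,…,P_ℓ be vertex-disjoint induced paths of a finite simple block graph G, each equipped with an orientation φ_i. Then the directed multigraph K_{P_ind} has no loops and no repeated arcs, i.e., K_{P_ind} is a simple directed graph. -/

import Mathlib

open SimpleGraph

/-- An induced path in a simple graph `G`: a walk which is a path and such that the
subgraph of `G` induced on its vertex set equals the path. -/
structure InducedPath {V : Type*} (G : SimpleGraph V) where
  first : V
  last : V
  walk : G.Walk first last
  isPath : walk.IsPath
  induced : ∀ x ∈ walk.support, ∀ y ∈ walk.support, G.Adj x y → s(x, y) ∈ walk.edges

namespace InducedPath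

variable {V : Type*} {G : SimpleGraph V}

/-- The vertex set of an induced path. -/
def vertexSet (P : InducedPath G) : Set V := {v | v ∈ P.walk.support}

/-- The edge set of an induced path. -/
def edgeSet (P : InducedPath G) : Set (Sym2 V) := {e | e ∈ P.walk.edges}

/-- The terminal vertices `∂P` of an induced path. -/
def boundary (P : InducedPath G) : Set V := {P.first, P.last}

/-- The internal vertices `P°` of an induced path. -/
def interior (P : InducedPath G) : Set V := P.vertexSet \ P.boundary

end InducedPath

section FamilyDefs

variable {V : Type*} (G : SimpleGraph V) {ℓ : ℕ}

/-- `Q` contains `P` as a subgraph. -/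
def PathContains (Q P : InducedPath G) : Prop :=
  P.vertexSet ⊆ Q.vertexSet ∧ P.edgeSet ⊆ Q.edgeSet

/-- The vertex set of `P_ind`, the induced subgraph on `⋃ i, V(P i)`. -/
def famVerts (P : Fin ℓ → InducedPath G) : Set V := ⋃ i, (P i).vertexSet

/-- The union of the edge sets of the paths `P i`. -/
def famEdges (P : Fin ℓ → InducedPath G) : Set (Sym2 V) := ⋃ i, (P i).edgeSet

/-- The paths `P i` are pairwise vertex-disjoint. -/
def PairwiseVertexDisjoint (P : Fin ℓ → InducedPath G) : Prop :=
  ∀ i j : Fin ℓ, i ≠ j → Disjoint (P i).vertexSet (P j).vertexSet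

/-- `φ` is an orientation of the induced path `P`, i.e. a surjection `{1,2} → ∂P`. -/
def IsOrientation (P : InducedPath G) (φ : Fin 2 → V) : Prop :=
  Set.range φ = P.boundary

/-- `Q` is an induced path of `P_ind` (equivalently, an induced path of `G` all of whose
vertices belong to `⋃ i, V(P i)`). -/
def IsPathOfInd (P : Fin ℓ → InducedPath G) (Q : InducedPath G) : Prop :=
  Q.vertexSet ⊆ famVerts G P

/-- The data `(P, σ, φ)` is DOIP. -/
def IsDOIPData (P : Fin ℓ → InducedPath G) (σ : Equiv.Perm (Fin ℓ))
    (φ : Fin ℓ → Fin 2 → V) : Prop :=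
  (∀ i, IsOrientation G (P i) (φ i)) ∧
    ∀ i j : Fin ℓ, σ i ≤ σ j → ∀ Q : InducedPath G, IsPathOfInd G P Q →
      ({Q.first, Q.last} : Set V) = {φ (σ i) 0, φ (σ j) 1} →
      ∃ k, PathContains G Q (P k)

/-- The family `P` is DOIP: there exist `σ` and orientations making it DOIP. -/
def FamilyDOIP (P : Fin ℓ → InducedPath G) : Prop :=
  ∃ (σ : Equiv.Perm (Fin ℓ)) (φ : Fin ℓ → Fin 2 → V), IsDOIPData G P σ φ

/-- `Q` realizes an arc `(i,j)` of the directed multigraph `K_{P_ind}`. -/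
def KArcWitness (P : Fin ℓ → InducedPath G) (φ : Fin ℓ → Fin 2 → V) (i j : Fin ℓ)
    (Q : InducedPath G) : Prop :=
  IsPathOfInd G P Q ∧ ({Q.first, Q.last} : Set V) = {φ i 0, φ j 1} ∧
    ∀ k, ¬ PathContains G Q (P k)

/-- `(i,j)` is an arc of `K_{P_ind}`. -/
def KArc (P : Fin ℓ → InducedPath G) (φ : Fin ℓ → Fin 2 → V) (i j : Fin ℓ) : Prop :=
  ∃ Q : InducedPath G, KArcWitness G P φ i j Q

/-- The directed multigraph `K_{P_ind}` is directed acyclic (no loops and no directed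
cycles). -/
def KAcyclic (P : Fin ℓ → InducedPath G) (φ : Fin ℓ → Fin 2 → V) : Prop :=
  ∀ i : Fin ℓ, ¬ Relation.TransGen (KArc G P φ) i i

/-- `Q` is a strand of `P_ind` from `P i` to `P j`. -/
def IsStrand (P : Fin ℓ → InducedPath G) (φ : Fin ℓ → Fin 2 → V) (i j : Fin ℓ)
    (Q : InducedPath G) : Prop :=
  i ≠ j ∧ IsPathOfInd G P Q ∧ Q.first ≠ φ i 1 ∧ Q.last ≠ φ j 0 ∧
    Q.vertexSet ∩ (P i).vertexSet = {Q.first} ∧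
    Q.vertexSet ∩ (P j).vertexSet = {Q.last} ∧
    ∀ k, ¬ PathContains G Q (P k)

/-- `Q` is an internal strand of `P_ind` from `P i` to `P j`. -/
def IsInternalStrand (P : Fin ℓ → InducedPath G) (i j : Fin ℓ) (Q : InducedPath G) : Prop :=
  i ≠ j ∧ IsPathOfInd G P Q ∧
    Q.first ∈ (P i).interior ∧ Q.last ∈ (P j).interior ∧
    Q.vertexSet ∩ (P i).vertexSet = {Q.first} ∧
    Q.vertexSet ∩ (P j).vertexSet = {Q.last} ∧
    ∀ k, ¬ PathContains G Q (P k)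

/-- `(Q, b, c)` is an internal fork of `P_ind` from `P i` to `P j`. -/
def IsInternalFork (P : Fin ℓ → InducedPath G) (i j : Fin ℓ) (Q : InducedPath G)
    (b c : V) : Prop :=
  i ≠ j ∧ IsPathOfInd G P Q ∧ Q.first ∈ (P i).interior ∧
    Q.vertexSet ∩ (P i).vertexSet = {Q.first} ∧
    Q.vertexSet ∩ (P j).vertexSet = ∅ ∧
    b ∈ (P j).vertexSet ∧ c ∈ (P j).vertexSet ∧ b ≠ c ∧
    G.Adj Q.last b ∧ G.Adj Q.last c ∧
    ∀ k, ¬ PathContains G Q (P k)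

/-- `(Q, a, b, c, d)` is a double fork of `P_ind` from `P i` to `P j`. -/
def IsDoubleFork (P : Fin ℓ → InducedPath G) (i j : Fin ℓ) (Q : InducedPath G)
    (a b c d : V) : Prop :=
  i ≠ j ∧ IsPathOfInd G P Q ∧
    Q.vertexSet ∩ (P i).vertexSet = ∅ ∧
    Q.vertexSet ∩ (P j).vertexSet = ∅ ∧
    a ∈ (P i).vertexSet ∧ b ∈ (P i).vertexSet ∧ a ≠ b ∧
    c ∈ (P j).vertexSet ∧ d ∈ (P j).vertexSet ∧ c ≠ d ∧
    G.Adj Q.first a ∧ G.Adj Q.first b ∧ G.Adj Q.last c ∧ G.Adj Q.last d ∧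
    ∀ k, ¬ PathContains G Q (P k)

/-- `(a, b, c, d)` is a complete ladder of `P_ind` between `P i` and `P j`. -/
def IsCompleteLadder (P : Fin ℓ → InducedPath G) (i j : Fin ℓ) (a b c d : V) : Prop :=
  i ≠ j ∧ a ∈ (P i).vertexSet ∧ b ∈ (P i).vertexSet ∧ a ≠ b ∧
    c ∈ (P j).vertexSet ∧ d ∈ (P j).vertexSet ∧ c ≠ d ∧
    G.Adj a b ∧ G.Adj a c ∧ G.Adj a d ∧ G.Adj b c ∧ G.Adj b d ∧ G.Adj c d

/-- `P_ind` contains an internal strand, an internal fork, a double fork, or a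
complete ladder. -/
def HasForbidden (P : Fin ℓ → InducedPath G) : Prop :=
  (∃ i j Q, IsInternalStrand G P i j Q) ∨
  (∃ i j Q b c, IsInternalFork G P i j Q b c) ∨
  (∃ i j Q a b c d, IsDoubleFork G P i j Q a b c d) ∨
  (∃ i j a b c d, IsCompleteLadder G P i j a b c d)

/-- `P_ind` contains a complete ladder, or an internal strand, internal fork, or double
fork which is edge-disjoint from the family `P`. -/
def HasForbiddenEdgeDisjoint (P : Fin ℓ → InducedPath G) : Prop :=
  (∃ i j Q, IsInternalStrand G P i j Q ∧ Disjoint Q.edgeSet (famEdges G P)) ∨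
  (∃ i j Q b c, IsInternalFork G P i j Q b c ∧
    Disjoint (Q.edgeSet ∪ {s(Q.last, b), s(Q.last, c)}) (famEdges G P)) ∨
  (∃ i j Q a b c d, IsDoubleFork G P i j Q a b c d ∧
    Disjoint (Q.edgeSet ∪ {s(Q.first, a), s(Q.first, b), s(Q.last, c), s(Q.last, d)})
      (famEdges G P)) ∨
  (∃ i j a b c d, IsCompleteLadder G P i j a b c d)

end FamilyDefs

section Invariants

variable {V : Type*}

/-- The invariant `ν(G)`: the maximal total number of edges of a family of
vertex-disjoint induced paths of `G` which is DOIP. -/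
noncomputable def nu (G : SimpleGraph V) : ℕ :=
  sSup {n : ℕ | ∃ (ℓ : ℕ) (P : Fin ℓ → InducedPath G),
    PairwiseVertexDisjoint G P ∧ FamilyDOIP G P ∧ n = ∑ i, (P i).walk.length}

/-- `ℓ(G)`: the number of edges of a longest induced path of `G`. -/
noncomputable def longestInducedPathLength (G : SimpleGraph V) : ℕ :=
  sSup {n : ℕ | ∃ P : InducedPath G, n = P.walk.length}

end Invariants

section BlockGraphs

variable {V : Type*} {G : SimpleGraph V}

/-- A subgraph is biconnected if it is connected and remains connected after
deleting any single vertex. -/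
def SubgraphBiconnected (H : G.Subgraph) : Prop :=
  H.coe.Connected ∧ ∀ v : V, ((H.deleteVerts {v}).coe).Connected

/-- A block of `G` is a maximal biconnected subgraph. -/
def IsBlock (H : G.Subgraph) : Prop :=
  SubgraphBiconnected H ∧ ∀ H' : G.Subgraph, SubgraphBiconnected H' → H ≤ H' → H' = H

/-- `G` is a block graph if every block of `G` is a complete graph. -/
def IsBlockGraph (G : SimpleGraph V) : Prop :=
  ∀ H : G.Subgraph, IsBlock H → ∀ a ∈ H.verts, ∀ b ∈ H.verts, a ≠ b → H.Adj a b

/-- The intersection `Q ∩ R` of two induced paths, as a subgraph of `G`. -/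
def pathsInter (Q R : InducedPath G) : G.Subgraph where
  verts := Q.vertexSet ∩ R.vertexSet
  Adj a b := G.Adj a b ∧ s(a, b) ∈ Q.walk.edges ∧ s(a, b) ∈ R.walk.edges
  adj_sub h := h.1
  edge_vert h := ⟨Q.walk.fst_mem_support_of_mem_edges h.2.1,
    R.walk.fst_mem_support_of_mem_edges h.2.2⟩
  symm := by
    constructor
    intro a b h
    refine ⟨h.1.symm, ?_, ?_⟩
    · rw [Sym2.eq_swap]; exact h.2.1
    · rw [Sym2.eq_swap]; exact h.2.2

/-- `s` is a maximal clique of `G`. -/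
def IsMaxClique (G : SimpleGraph V) (s : Set V) : Prop :=
  G.IsClique s ∧ ∀ t : Set V, G.IsClique t → s ⊆ t → s = t

/-- `G` has the two-block property: every vertex belongs to at most two maximal
cliques. -/
def TwoBlockProperty (G : SimpleGraph V) : Prop :=
  ∀ v : V, ({s : Set V | IsMaxClique G s ∧ v ∈ s}).ncard ≤ 2

/-- The completion `G_c` of `G` at the vertex `c`. -/
def completionAt (G : SimpleGraph V) (c : V) : SimpleGraph V where
  Adj u w := G.Adj u w ∨ (u ≠ w ∧ G.Adj c u ∧ G.Adj c w)
  symm := by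
    constructor
    intro u w h
    rcases h with h | ⟨hne, h1, h2⟩
    · exact Or.inl h.symm
    · exact Or.inr ⟨hne.symm, h2, h1⟩
  loopless := by
    constructor
    intro u h
    rcases h with h | ⟨hne, _, _⟩
    · first | exact G.loopless.irrefl u h | exact G.irrefl h
    · exact hne rfl

/-- The number of connected components of a graph. -/
noncomputable def numComponents (G : SimpleGraph V) : ℕ :=
  Nat.card G.ConnectedComponent

/-- `c` is a cut vertex of `G`: deleting it strictly increases the number of
connected components. -/
def IsCutVertex (G : SimpleGraph V) (c : V) : Prop :=
  numComponents G < numComponents (G.induce ({c}ᶜ : Set V))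

end BlockGraphs

/-!
In a block graph every cycle is biconnected, so it lies in a block and its vertices form a
clique. If two different chordless paths had the same ends, a segment of each would close up
into a cycle; the ends of the two segments are then adjacent, so chordlessness makes each segment
a single edge, and no cycle has length two. Hence an induced path of a block graph is determined
by its ends. A loop at `i` in `K_{P_ind}` would be an induced path with the ends of `P i`, that is
`P i` itself, and two arcs `(i, j)` are induced paths with the same ends.
-/

namespace SimpleGraph

variable {V : Type*} {G : SimpleGraph V}

theorem Subgraph.le_deleteVerts {H K : G.Subgraph} {s : Set V} (hle : K ≤ H)
    (hs : Disjoint K.verts s) : K ≤ H.deleteVerts s := by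
  refine ⟨fun x hx => ⟨hle.1 hx, hs.notMem_of_mem_left hx⟩, fun x y hxy => ?_⟩
  have hx := K.edge_vert hxy
  have hy := K.edge_vert hxy.symm
  exact ⟨⟨hle.1 hx, hs.notMem_of_mem_left hx⟩, ⟨hle.1 hy, hs.notMem_of_mem_left hy⟩, hle.2 hxy⟩

namespace Walk

theorem IsCycle.connected_toSubgraph_deleteVerts_start {v : V} {c : G.Walk v v}
    (hc : c.IsCycle) : (c.toSubgraph.deleteVerts {v}).Connected := by
  cases c with
  | nil => exact absurd hc not_isCycle_nil
  | cons h q =>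
    have hq : ¬ q.Nil := fun hn => by
      simpa [length_eq_zero_iff.mpr hn] using hc.three_le_length
    rw [← concat_dropLast (q.adj_penultimate hq)] at hc ⊢
    set r := q.dropLast
    have hv : v ∉ r.support := ((concat_isPath_iff _).mp ((cons_isCycle_iff _ h).mp hc).1).2
    -- deleting `v` from the cycle `cons h (r.concat _)` leaves the path `r`
    refine r.toSubgraph_connected.mono ?_ ?_
    · refine Subgraph.le_deleteVerts ?_ (Set.disjoint_singleton_right.mpr (by simpa using hv))
      simpa [concat, toSubgraph_append] using le_sup_left.trans le_sup_right
    · ext x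
      simp only [Subgraph.deleteVerts_verts, verts_toSubgraph, support_cons, support_concat]
      grind

theorem IsCycle.connected_toSubgraph_deleteVerts {u : V} {c : G.Walk u u}
    (hc : c.IsCycle) (v : V) : (c.toSubgraph.deleteVerts {v}).Connected := by
  classical
  by_cases hv : v ∈ c.support
  · rw [← c.toSubgraph_rotate hv]
    exact (hc.rotate hv).connected_toSubgraph_deleteVerts_start
  · rw [← Subgraph.deleteVerts_inter_verts_set_right_eq,
      Set.singleton_inter_eq_empty.mpr (by simpa using hv), Subgraph.deleteVerts_empty]
    exact c.toSubgraph_connected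

theorem IsCycle.subgraphBiconnected_toSubgraph {u : V} {c : G.Walk u u} (hc : c.IsCycle) :
    SubgraphBiconnected c.toSubgraph :=
  ⟨c.toSubgraph_connected.coe, fun v => (hc.connected_toSubgraph_deleteVerts v).coe⟩

theorem IsChordless.of_isSubwalk {u v u' v' : V} {p : G.Walk u v} {p' : G.Walk u' v'}
    (hp : p.IsPath) (hc : p.IsChordless) (hsub : p'.IsSubwalk p) : p'.IsChordless := by
  rw [isChordless_iff_forall_mem_edges] at hc ⊢
  intro x y hx hy hxy
  obtain ⟨ru, rv, rfl⟩ := hsub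
  have hnd := hp.support_nodup
  rw [support_append, support_append, List.nodup_append, List.nodup_append] at hnd
  have hx' := p'.cons_tail_support ▸ hx
  have hy' := p'.cons_tail_support ▸ hy
  -- `ru` and `rv` meet `p'` only in `u'` and `v'`, so none of their edges joins two vertices
  -- of `p'`
  have hxy' := hc (by simp [hx]) (by simp [hy]) hxy
  rw [edges_append, edges_append, List.mem_append, List.mem_append] at hxy'
  rcases hxy' with (h | h) | h
  · have := ru.fst_mem_support_of_mem_edges h
    have := ru.snd_mem_support_of_mem_edges h
    grind [Adj.ne]
  · exact h
  · have := rv.fst_mem_support_of_mem_edges h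
    have := rv.snd_mem_support_of_mem_edges h
    have := rv.cons_tail_support
    grind [Adj.ne, end_mem_support, support_append]

theorem IsPath.length_eq_one_of_isSubwalk {u v u' v' : V} {p : G.Walk u v} {p' : G.Walk u' v'}
    (hp : p.IsPath) (hc : p.IsChordless) (hsub : p'.IsSubwalk p) (hadj : G.Adj u' v') :
    p'.length = 1 :=
  (isPath_of_isSubwalk hsub hp).length_eq_one_of_mem_edges
    ((hc.of_isSubwalk hp hsub).mem_edges p'.start_mem_support p'.end_mem_support hadj)

theorem IsPath.eq_of_isChordless
    (hcyc : ∀ ⦃w : V⦄ (c : G.Walk w w), c.IsCycle → G.IsClique {x | x ∈ c.support})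
    {u v : V} {p q : G.Walk u v} (hp : p.IsPath) (hq : q.IsPath) (hpc : p.IsChordless)
    (hqc : q.IsChordless) : p = q := by
  by_contra hne
  obtain ⟨u', v', p', q', hp', hq', hc⟩ := hp.exists_isCycle_of_ne hq hne
  have hlen := hc.three_le_length
  rw [length_append, length_reverse] at hlen
  by_cases huv : u' = v'
  · subst huv
    have hp'nil := isPath_iff_nil.mp (isPath_of_isSubwalk hp' hp)
    have hq'nil := isPath_iff_nil.mp (isPath_of_isSubwalk hq' hq)
    simp [length_eq_zero_iff.mpr hp'nil, length_eq_zero_iff.mpr hq'nil] at hlen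
  have hadj : G.Adj u' v' := hcyc _ hc (by simp) (by simp) huv
  have := hp.length_eq_one_of_isSubwalk hpc hp' hadj
  have := hq.length_eq_one_of_isSubwalk hqc hq' hadj
  omega

end Walk

end SimpleGraph

section

variable {V : Type*} {G : SimpleGraph V}

theorem exists_isBlock_le [Finite V] {H : G.Subgraph} (hH : SubgraphBiconnected H) :
    ∃ B : G.Subgraph, IsBlock B ∧ H ≤ B := by
  obtain ⟨B, ⟨hB, hHB⟩, hmax⟩ := Set.Finite.exists_maximalFor id
    {H' : G.Subgraph | SubgraphBiconnected H' ∧ H ≤ H'} (Set.toFinite _) ⟨H, hH, le_rfl⟩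
  exact ⟨B, ⟨hB, fun H' hH' hle => le_antisymm (hmax ⟨hH', hHB.trans hle⟩ hle) hle⟩, hHB⟩

theorem IsBlockGraph.isClique_support_of_isCycle [Finite V] (hBG : IsBlockGraph G) {u : V}
    {c : G.Walk u u} (hc : c.IsCycle) : G.IsClique {x | x ∈ c.support} := by
  obtain ⟨B, hB, hcB⟩ := exists_isBlock_le hc.subgraphBiconnected_toSubgraph
  intro x hx y hy hxy
  exact B.adj_sub (hBG B hB x (hcB.1 (c.mem_verts_toSubgraph.mpr hx))
    y (hcB.1 (c.mem_verts_toSubgraph.mpr hy)) hxy)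

end

namespace InducedPath

variable {V : Type*} {G : SimpleGraph V}

theorem isChordless (P : InducedPath G) : P.walk.IsChordless :=
  Walk.isChordless_iff_forall_mem_edges.mpr fun x y hx hy => P.induced x hx y hy

def reverse (P : InducedPath G) : InducedPath G where
  first := P.last
  last := P.first
  walk := P.walk.reverse
  isPath := P.isPath.reverse
  induced x hx y hy hxy := by
    rw [Walk.support_reverse, List.mem_reverse] at hx hy
    rw [Walk.edges_reverse, List.mem_reverse]
    exact P.induced x hx y hy hxy

@[simp]
theorem vertexSet_reverse (P : InducedPath G) : P.reverse.vertexSet = P.vertexSet := by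
  ext; simp [vertexSet, reverse]

@[simp]
theorem edgeSet_reverse (P : InducedPath G) : P.reverse.edgeSet = P.edgeSet := by
  ext; simp [edgeSet, reverse]

theorem eq_of_first_eq_of_last_eq [Finite V] (hBG : IsBlockGraph G) {Q R : InducedPath G}
    (hfirst : Q.first = R.first) (hlast : Q.last = R.last) : Q = R := by
  revert hfirst hlast
  rcases Q with ⟨a, b, p, hp, hpi⟩
  rcases R with ⟨a', b', q, hq, hqi⟩
  rintro (rfl : a = a') (rfl : b = b')
  obtain rfl := Walk.IsPath.eq_of_isChordless (fun _ _ hc => hBG.isClique_support_of_isCycle hc)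
    hp hq (isChordless ⟨a, b, p, hp, hpi⟩) (isChordless ⟨a, b, q, hq, hqi⟩)
  rfl

theorem vertexSet_eq_and_edgeSet_eq_of_ends [Finite V] (hBG : IsBlockGraph G)
    {Q R : InducedPath G} (h : ({Q.first, Q.last} : Set V) = {R.first, R.last}) :
    Q.vertexSet = R.vertexSet ∧ Q.edgeSet = R.edgeSet := by
  rcases Set.pair_eq_pair_iff.mp h with ⟨h1, h2⟩ | ⟨h1, h2⟩
  · rw [eq_of_first_eq_of_last_eq hBG h1 h2]
    exact ⟨rfl, rfl⟩
  · rw [eq_of_first_eq_of_last_eq (R := R.reverse) hBG h1 h2]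
    exact ⟨R.vertexSet_reverse, R.edgeSet_reverse⟩

end InducedPath

theorem IsOrientation.pair_eq_boundary {V : Type*} {G : SimpleGraph V} {P : InducedPath G}
    {φ : Fin 2 → V} (hφ : IsOrientation G P φ) : ({φ 0, φ 1} : Set V) = P.boundary := by
  rw [← hφ]
  ext
  simp [Fin.exists_fin_two, eq_comm]

theorem blockGraph_K_simple_general {V : Type*} [Fintype V]
    (G : SimpleGraph V) (hBG : IsBlockGraph G) (ℓ : ℕ) (P : Fin ℓ → InducedPath G)
    (φ : Fin ℓ → Fin 2 → V)
    (horient : ∀ i, IsOrientation G (P i) (φ i)) :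
    (∀ i : Fin ℓ, ¬ KArc G P φ i i) ∧
    (∀ (i j : Fin ℓ) (Q₁ Q₂ : InducedPath G),
      KArcWitness G P φ i j Q₁ → KArcWitness G P φ i j Q₂ →
      Q₁.vertexSet = Q₂.vertexSet ∧ Q₁.edgeSet = Q₂.edgeSet) := by
  refine ⟨fun i ⟨Q, _, hends, hnot⟩ => ?_, fun i j Q₁ Q₂ h₁ h₂ => ?_⟩
  · obtain ⟨hv, he⟩ := InducedPath.vertexSet_eq_and_edgeSet_eq_of_ends hBG
      (hends.trans (horient i).pair_eq_boundary)
    exact hnot i ⟨hv.ge, he.ge⟩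
  · exact InducedPath.vertexSet_eq_and_edgeSet_eq_of_ends hBG (h₁.2.1.trans h₂.2.1.symm)

/-- **Theorem (Statement 8).** For vertex-disjoint induced oriented paths of a finite
simple block graph, the directed multigraph `K_{P_ind}` has no loops and no repeated
arcs. -/
theorem blockGraph_K_simple {V : Type*} [Fintype V] [DecidableEq V]
    (G : SimpleGraph V) (hBG : IsBlockGraph G) (ℓ : ℕ) (P : Fin ℓ → InducedPath G)
    (hdisj : PairwiseVertexDisjoint G P) (φ : Fin ℓ → Fin 2 → V)
    (horient : ∀ i, IsOrientation G (P i) (φ i)) :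
    (∀ i : Fin ℓ, ¬ KArc G P φ i i) ∧
    (∀ (i j : Fin ℓ) (Q₁ Q₂ : InducedPath G),
      KArcWitness G P φ i j Q₁ → KArcWitness G P φ i j Q₂ →
      Q₁.vertexSet = Q₂.vertexSet ∧ Q₁.edgeSet = Q₂.edgeSet) :=
  blockGraph_K_simple_general G hBG ℓ P φ horient
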